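/- (Existence and uniqueness) Let φ, φ₁, φ₂, f satisfy assumption (A) and suppose (1+‖φ‖)·(‖φ₁‖+‖φ₂‖) < 1. Then there exists exactly one u ∈ H₀¹[0,1] satisfying u(x) = φ(x)·u(φ₁(x)) + (1−φ(x))·u(φ₂(x)) + f(x) for all x ∈ [0,1], and it satisfies ‖u‖ ≤ ‖f‖ / (1 − (1+‖φ‖)(‖φ₁‖+‖φ₂‖)). -/

import Mathlib

open Set

/-- `v` is Lipschitz on `[0,1]`. -/
def IsLipOn01 (v : ℝ → ℝ) : Prop := ∃ K : NNReal, LipschitzOnWith K v (Icc (0:ℝ) 1)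

/-- `v ∈ H₀¹[0,1]`: Lipschitz on `[0,1]` with `v 0 = v 1 = 0`. -/
def MemH01 (v : ℝ → ℝ) : Prop := IsLipOn01 v ∧ v 0 = 0 ∧ v 1 = 0

/-- The Lipschitz seminorm of `v` on `[0,1]`. -/
noncomputable def lipSemi (v : ℝ → ℝ) : ℝ :=
  sSup {r : ℝ | ∃ x ∈ Icc (0:ℝ) 1, ∃ y ∈ Icc (0:ℝ) 1, x ≠ y ∧ r = |v x - v y| / |x - y|}

lemma bddAbove_ratios {v : ℝ → ℝ} (hv : IsLipOn01 v) :
    BddAbove {r : ℝ | ∃ x ∈ Icc (0:ℝ) 1, ∃ y ∈ Icc (0:ℝ) 1, x ≠ y ∧ r = |v x - v y| / |x - y|} := by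
  obtain ⟨K, hK⟩ := hv
  refine ⟨K, ?_⟩
  rintro r ⟨x, hx, y, hy, hxy, rfl⟩
  have h := hK.dist_le_mul x hx y hy
  rw [Real.dist_eq, Real.dist_eq] at h
  have hpos : (0:ℝ) < |x - y| := abs_pos.2 (sub_ne_zero.2 hxy)
  rw [div_le_iff₀ hpos]
  exact h

lemma lipSemi_nonneg {v : ℝ → ℝ} (hv : IsLipOn01 v) : 0 ≤ lipSemi v := by
  have hmem : |v 0 - v 1| / |(0:ℝ) - 1| ∈
      {r : ℝ | ∃ x ∈ Icc (0:ℝ) 1, ∃ y ∈ Icc (0:ℝ) 1, x ≠ y ∧ r = |v x - v y| / |x - y|} :=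
    ⟨0, by norm_num, 1, by norm_num, by norm_num, rfl⟩
  have := le_csSup (bddAbove_ratios hv) hmem
  have h0 : (0:ℝ) ≤ |v 0 - v 1| / |(0:ℝ) - 1| := div_nonneg (abs_nonneg _) (abs_nonneg _)
  exact h0.trans this

lemma abs_sub_le_lipSemi {v : ℝ → ℝ} (hv : IsLipOn01 v) {x y : ℝ}
    (hx : x ∈ Icc (0:ℝ) 1) (hy : y ∈ Icc (0:ℝ) 1) :
    |v x - v y| ≤ lipSemi v * |x - y| := by
  rcases eq_or_ne x y with rfl | hxy
  · simp
  · have hpos : (0:ℝ) < |x - y| := abs_pos.2 (sub_ne_zero.2 hxy)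
    have hmem : |v x - v y| / |x - y| ∈
        {r : ℝ | ∃ x ∈ Icc (0:ℝ) 1, ∃ y ∈ Icc (0:ℝ) 1, x ≠ y ∧ r = |v x - v y| / |x - y|} :=
      ⟨x, hx, y, hy, hxy, rfl⟩
    have := le_csSup (bddAbove_ratios hv) hmem
    calc |v x - v y| = |v x - v y| / |x - y| * |x - y| := by field_simp
    _ ≤ lipSemi v * |x - y| := by
        exact mul_le_mul_of_nonneg_right this (abs_nonneg _)

lemma lipSemi_le {v : ℝ → ℝ} {L : ℝ} (hL : 0 ≤ L)
    (h : ∀ x ∈ Icc (0:ℝ) 1, ∀ y ∈ Icc (0:ℝ) 1, |v x - v y| ≤ L * |x - y|) :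
    lipSemi v ≤ L := by
  apply Real.sSup_le _ hL
  rintro r ⟨x, hx, y, hy, hxy, rfl⟩
  have hpos : (0:ℝ) < |x - y| := abs_pos.2 (sub_ne_zero.2 hxy)
  rw [div_le_iff₀ hpos]
  exact h x hx y hy

/-- The affine operator (without the `+ f` part). -/
noncomputable def Tmap (φ φ₁ φ₂ : ℝ → ℝ) (v : ℝ → ℝ) : ℝ → ℝ :=
  fun x => φ x * v (φ₁ x) + (1 - φ x) * v (φ₂ x)

/-- The key contraction estimate for `Tmap`. -/
lemma step_est (φ φ₁ φ₂ : ℝ → ℝ)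
    (hφ : IsLipOn01 φ) (hφmem : ∀ x ∈ Icc (0:ℝ) 1, φ x ∈ Icc (0:ℝ) 1)
    (hφ₁ : IsLipOn01 φ₁) (hφ₁1 : φ₁ 1 = 1)
    (hφ₁mem : ∀ x ∈ Icc (0:ℝ) 1, φ₁ x ∈ Icc (0:ℝ) 1)
    (hφ₂ : IsLipOn01 φ₂) (hφ₂0 : φ₂ 0 = 0)
    (hφ₂mem : ∀ x ∈ Icc (0:ℝ) 1, φ₂ x ∈ Icc (0:ℝ) 1)
    (v : ℝ → ℝ) (M : ℝ) (hM : 0 ≤ M) (hv0 : v 0 = 0) (hv1 : v 1 = 0)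
    (hvlip : ∀ x ∈ Icc (0:ℝ) 1, ∀ y ∈ Icc (0:ℝ) 1, |v x - v y| ≤ M * |x - y|) :
    ∀ x ∈ Icc (0:ℝ) 1, ∀ y ∈ Icc (0:ℝ) 1,
      |Tmap φ φ₁ φ₂ v x - Tmap φ φ₁ φ₂ v y|
        ≤ (1 + lipSemi φ) * (lipSemi φ₁ + lipSemi φ₂) * M * |x - y| := by
  intro x hx y hy
  have hb0 : 0 ≤ lipSemi φ₁ := lipSemi_nonneg hφ₁
  have hc0 : 0 ≤ lipSemi φ₂ := lipSemi_nonneg hφ₂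
  have hone : (1:ℝ) ∈ Icc (0:ℝ) 1 := by norm_num
  have hzero : (0:ℝ) ∈ Icc (0:ℝ) 1 := by norm_num
  have hA : |v (φ₁ x) - v (φ₁ y)| ≤ M * (lipSemi φ₁ * |x - y|) :=
    (hvlip _ (hφ₁mem x hx) _ (hφ₁mem y hy)).trans
      (mul_le_mul_of_nonneg_left (abs_sub_le_lipSemi hφ₁ hx hy) hM)
  have hB : |v (φ₂ x) - v (φ₂ y)| ≤ M * (lipSemi φ₂ * |x - y|) :=
    (hvlip _ (hφ₂mem x hx) _ (hφ₂mem y hy)).trans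
      (mul_le_mul_of_nonneg_left (abs_sub_le_lipSemi hφ₂ hx hy) hM)
  have hy1 : |y - 1| ≤ 1 := by
    rw [abs_le]; constructor <;> linarith [hy.1, hy.2]
  have hy0 : |y - 0| ≤ 1 := by
    rw [abs_le]; constructor <;> linarith [hy.1, hy.2]
  have hC1 : |v (φ₁ y) - v 1| ≤ M * lipSemi φ₁ := by
    have h1 : |v (φ₁ y) - v 1| ≤ M * |φ₁ y - 1| := hvlip _ (hφ₁mem y hy) _ hone
    have h2 : |φ₁ y - 1| ≤ lipSemi φ₁ * |y - 1| := by
      have := abs_sub_le_lipSemi hφ₁ hy hone; rwa [hφ₁1] at this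
    have h3 : lipSemi φ₁ * |y - 1| ≤ lipSemi φ₁ := by
      calc lipSemi φ₁ * |y - 1| ≤ lipSemi φ₁ * 1 := mul_le_mul_of_nonneg_left hy1 hb0
      _ = lipSemi φ₁ := mul_one _
    calc |v (φ₁ y) - v 1| ≤ M * |φ₁ y - 1| := h1
    _ ≤ M * lipSemi φ₁ := mul_le_mul_of_nonneg_left (h2.trans h3) hM
  have hC2 : |v (φ₂ y) - v 0| ≤ M * lipSemi φ₂ := by
    have h1 : |v (φ₂ y) - v 0| ≤ M * |φ₂ y - 0| := hvlip _ (hφ₂mem y hy) _ hzero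
    have h2 : |φ₂ y - 0| ≤ lipSemi φ₂ * |y - 0| := by
      have := abs_sub_le_lipSemi hφ₂ hy hzero; rwa [hφ₂0] at this
    have h3 : lipSemi φ₂ * |y - 0| ≤ lipSemi φ₂ := by
      calc lipSemi φ₂ * |y - 0| ≤ lipSemi φ₂ * 1 := mul_le_mul_of_nonneg_left hy0 hc0
      _ = lipSemi φ₂ := mul_one _
    calc |v (φ₂ y) - v 0| ≤ M * |φ₂ y - 0| := h1
    _ ≤ M * lipSemi φ₂ := mul_le_mul_of_nonneg_left (h2.trans h3) hM
  have hC : |v (φ₁ y) - v (φ₂ y)| ≤ M * (lipSemi φ₁ + lipSemi φ₂) := by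
    have : v (φ₁ y) - v (φ₂ y) = (v (φ₁ y) - v 1) - (v (φ₂ y) - v 0) := by
      rw [hv0, hv1]; ring
    rw [this]
    calc |(v (φ₁ y) - v 1) - (v (φ₂ y) - v 0)| ≤ |v (φ₁ y) - v 1| + |v (φ₂ y) - v 0| :=
      abs_sub _ _
    _ ≤ M * lipSemi φ₁ + M * lipSemi φ₂ := add_le_add hC1 hC2
    _ = M * (lipSemi φ₁ + lipSemi φ₂) := by ring
  have hφab : |φ x - φ y| ≤ lipSemi φ * |x - y| := abs_sub_le_lipSemi hφ hx hy
  have hφx0 : 0 ≤ φ x := (hφmem x hx).1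
  have hφx1 : φ x ≤ 1 := (hφmem x hx).2
  have key : Tmap φ φ₁ φ₂ v x - Tmap φ φ₁ φ₂ v y
      = φ x * (v (φ₁ x) - v (φ₁ y)) + (1 - φ x) * (v (φ₂ x) - v (φ₂ y))
        + (φ x - φ y) * (v (φ₁ y) - v (φ₂ y)) := by
    simp only [Tmap]; ring
  rw [key]
  have t1 : |φ x * (v (φ₁ x) - v (φ₁ y))| ≤ M * (lipSemi φ₁ * |x - y|) := by
    rw [abs_mul, abs_of_nonneg hφx0]
    calc φ x * |v (φ₁ x) - v (φ₁ y)| ≤ 1 * (M * (lipSemi φ₁ * |x - y|)) :=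
      mul_le_mul hφx1 hA (abs_nonneg _) one_pos.le
    _ = M * (lipSemi φ₁ * |x - y|) := one_mul _
  have t2 : |(1 - φ x) * (v (φ₂ x) - v (φ₂ y))| ≤ M * (lipSemi φ₂ * |x - y|) := by
    rw [abs_mul, abs_of_nonneg (by linarith : (0:ℝ) ≤ 1 - φ x)]
    calc (1 - φ x) * |v (φ₂ x) - v (φ₂ y)| ≤ 1 * (M * (lipSemi φ₂ * |x - y|)) :=
      mul_le_mul (by linarith) hB (abs_nonneg _) one_pos.le
    _ = M * (lipSemi φ₂ * |x - y|) := one_mul _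
  have t3 : |(φ x - φ y) * (v (φ₁ y) - v (φ₂ y))| ≤
      lipSemi φ * |x - y| * (M * (lipSemi φ₁ + lipSemi φ₂)) := by
    rw [abs_mul]
    exact mul_le_mul hφab hC (abs_nonneg _)
      (mul_nonneg (lipSemi_nonneg hφ) (abs_nonneg _))
  calc |φ x * (v (φ₁ x) - v (φ₁ y)) + (1 - φ x) * (v (φ₂ x) - v (φ₂ y))
        + (φ x - φ y) * (v (φ₁ y) - v (φ₂ y))|
      ≤ |φ x * (v (φ₁ x) - v (φ₁ y)) + (1 - φ x) * (v (φ₂ x) - v (φ₂ y))|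
        + |(φ x - φ y) * (v (φ₁ y) - v (φ₂ y))| := abs_add_le _ _
  _ ≤ (|φ x * (v (φ₁ x) - v (φ₁ y))| + |(1 - φ x) * (v (φ₂ x) - v (φ₂ y))|)
        + |(φ x - φ y) * (v (φ₁ y) - v (φ₂ y))| := by
      exact add_le_add (abs_add_le _ _) le_rfl
  _ ≤ (M * (lipSemi φ₁ * |x - y|) + M * (lipSemi φ₂ * |x - y|))
        + lipSemi φ * |x - y| * (M * (lipSemi φ₁ + lipSemi φ₂)) :=
      add_le_add (add_le_add t1 t2) t3
  _ = (1 + lipSemi φ) * (lipSemi φ₁ + lipSemi φ₂) * M * |x - y| := by ring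

/-- Existence and uniqueness: under assumption (A) and the contraction condition
`(1 + ‖φ‖)(‖φ₁‖ + ‖φ₂‖) < 1`, the equation `u = Tu + f` has exactly one solution
in `H₀¹[0,1]`, and it satisfies `‖u‖ ≤ ‖f‖ / (1 - (1 + ‖φ‖)(‖φ₁‖ + ‖φ₂‖))`. -/
theorem existence_uniqueness (φ φ₁ φ₂ f : ℝ → ℝ)
    (hφ : IsLipOn01 φ) (hφ0 : φ 0 = 0) (hφ1 : φ 1 = 1)
    (hφmem : ∀ x ∈ Icc (0:ℝ) 1, φ x ∈ Icc (0:ℝ) 1)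
    (hφ₁ : IsLipOn01 φ₁) (hφ₁1 : φ₁ 1 = 1)
    (hφ₁mem : ∀ x ∈ Icc (0:ℝ) 1, φ₁ x ∈ Icc (0:ℝ) 1)
    (hφ₂ : IsLipOn01 φ₂) (hφ₂0 : φ₂ 0 = 0)
    (hφ₂mem : ∀ x ∈ Icc (0:ℝ) 1, φ₂ x ∈ Icc (0:ℝ) 1)
    (hf : MemH01 f)
    (hcontr : (1 + lipSemi φ) * (lipSemi φ₁ + lipSemi φ₂) < 1) :
    ∃ u : ℝ → ℝ,
      (MemH01 u ∧
        (∀ x ∈ Icc (0:ℝ) 1, u x = φ x * u (φ₁ x) + (1 - φ x) * u (φ₂ x) + f x) ∧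
        lipSemi u ≤ lipSemi f / (1 - (1 + lipSemi φ) * (lipSemi φ₁ + lipSemi φ₂))) ∧
      ∀ w : ℝ → ℝ, MemH01 w →
        (∀ x ∈ Icc (0:ℝ) 1, w x = φ x * w (φ₁ x) + (1 - φ x) * w (φ₂ x) + f x) →
        EqOn w u (Icc (0:ℝ) 1) := by
  obtain ⟨hflip, hf0, hf1⟩ := hf
  set q := (1 + lipSemi φ) * (lipSemi φ₁ + lipSemi φ₂) with hqdef
  have ha0 := lipSemi_nonneg hφ
  have hb0 := lipSemi_nonneg hφ₁
  have hc0 := lipSemi_nonneg hφ₂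
  have hL0 : 0 ≤ lipSemi f := lipSemi_nonneg hflip
  have hq0 : 0 ≤ q := mul_nonneg (by linarith) (by linarith)
  have hq1 : q < 1 := hcontr
  have h1q : 0 < 1 - q := by linarith
  have hzero : (0:ℝ) ∈ Icc (0:ℝ) 1 := by norm_num
  have hone : (1:ℝ) ∈ Icc (0:ℝ) 1 := by norm_num
  -- properties of the iterates
  have hg : ∀ n : ℕ, (Tmap φ φ₁ φ₂)^[n] f 0 = 0 ∧ (Tmap φ φ₁ φ₂)^[n] f 1 = 0 ∧
      ∀ x ∈ Icc (0:ℝ) 1, ∀ y ∈ Icc (0:ℝ) 1,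
        |(Tmap φ φ₁ φ₂)^[n] f x - (Tmap φ φ₁ φ₂)^[n] f y| ≤ q ^ n * lipSemi f * |x - y| := by
    intro n
    induction n with
    | zero =>
      refine ⟨by simpa using hf0, by simpa using hf1, fun x hx y hy => ?_⟩
      simpa using abs_sub_le_lipSemi hflip hx hy
    | succ n ih =>
      obtain ⟨ih0, ih1, ihlip⟩ := ih
      have hnn : 0 ≤ q ^ n * lipSemi f := mul_nonneg (pow_nonneg hq0 n) hL0
      have hgs : (Tmap φ φ₁ φ₂)^[n+1] f = Tmap φ φ₁ φ₂ ((Tmap φ φ₁ φ₂)^[n] f) :=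
        Function.iterate_succ_apply' _ _ _
      have hstep := step_est φ φ₁ φ₂ hφ hφmem hφ₁ hφ₁1 hφ₁mem hφ₂ hφ₂0 hφ₂mem
        ((Tmap φ φ₁ φ₂)^[n] f) (q ^ n * lipSemi f) hnn ih0 ih1 ihlip
      rw [hgs]
      refine ⟨by simp [Tmap, hφ0, hφ₂0, ih0], by simp [Tmap, hφ1, hφ₁1, ih1],
        fun x hx y hy => ?_⟩
      calc |Tmap φ φ₁ φ₂ ((Tmap φ φ₁ φ₂)^[n] f) x - Tmap φ φ₁ φ₂ ((Tmap φ φ₁ φ₂)^[n] f) y|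
          ≤ q * (q ^ n * lipSemi f) * |x - y| := hstep x hx y hy
      _ = q ^ (n+1) * lipSemi f * |x - y| := by ring
  -- pointwise bound and summability
  have hbd : ∀ n : ℕ, ∀ x ∈ Icc (0:ℝ) 1, |(Tmap φ φ₁ φ₂)^[n] f x| ≤ q ^ n * lipSemi f := by
    intro n x hx
    have h := (hg n).2.2 x hx 0 hzero
    rw [(hg n).1, sub_zero] at h
    have hx1 : |x - 0| ≤ 1 := by rw [sub_zero, abs_of_nonneg hx.1]; exact hx.2
    calc |(Tmap φ φ₁ φ₂)^[n] f x| ≤ q ^ n * lipSemi f * |x - 0| := h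
    _ ≤ q ^ n * lipSemi f * 1 := mul_le_mul_of_nonneg_left hx1
        (mul_nonneg (pow_nonneg hq0 n) hL0)
    _ = q ^ n * lipSemi f := mul_one _
  have hsum : ∀ x ∈ Icc (0:ℝ) 1, Summable (fun n : ℕ => (Tmap φ φ₁ φ₂)^[n] f x) := by
    intro x hx
    exact Summable.of_norm_bounded
      ((summable_geometric_of_lt_one hq0 hq1).mul_right (lipSemi f))
      (fun n => by simpa [Real.norm_eq_abs] using hbd n x hx)
  set u : ℝ → ℝ := fun x => ∑' n : ℕ, (Tmap φ φ₁ φ₂)^[n] f x with hu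
  have hu0 : u 0 = 0 := by
    have : (fun n : ℕ => (Tmap φ φ₁ φ₂)^[n] f 0) = fun _ => (0:ℝ) :=
      funext fun n => (hg n).1
    rw [hu]; simp only [this, tsum_zero]
  have hu1 : u 1 = 0 := by
    have : (fun n : ℕ => (Tmap φ φ₁ φ₂)^[n] f 1) = fun _ => (0:ℝ) :=
      funext fun n => (hg n).2.1
    rw [hu]; simp only [this, tsum_zero]
  have hulip : ∀ x ∈ Icc (0:ℝ) 1, ∀ y ∈ Icc (0:ℝ) 1,
      |u x - u y| ≤ lipSemi f / (1 - q) * |x - y| := by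
    intro x hx y hy
    have hsx := hsum x hx
    have hsy := hsum y hy
    have hdiff : u x - u y = ∑' n : ℕ, ((Tmap φ φ₁ φ₂)^[n] f x - (Tmap φ φ₁ φ₂)^[n] f y) := by
      rw [hu]; exact (Summable.tsum_sub hsx hsy).symm
    have hgeo : HasSum (fun n : ℕ => q ^ n * (lipSemi f * |x - y|))
        ((1 - q)⁻¹ * (lipSemi f * |x - y|)) :=
      (hasSum_geometric_of_lt_one hq0 hq1).mul_right _
    have hb := tsum_of_norm_bounded hgeo (fun n => by
      rw [Real.norm_eq_abs]
      calc |(Tmap φ φ₁ φ₂)^[n] f x - (Tmap φ φ₁ φ₂)^[n] f y|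
          ≤ q ^ n * lipSemi f * |x - y| := (hg n).2.2 x hx y hy
      _ = q ^ n * (lipSemi f * |x - y|) := by ring)
    rw [hdiff]
    calc |∑' n : ℕ, ((Tmap φ φ₁ φ₂)^[n] f x - (Tmap φ φ₁ φ₂)^[n] f y)|
        ≤ (1 - q)⁻¹ * (lipSemi f * |x - y|) := hb
    _ = lipSemi f / (1 - q) * |x - y| := by ring
  have hulipnn : 0 ≤ lipSemi f / (1 - q) := div_nonneg hL0 h1q.le
  have huIsLip : IsLipOn01 u := by
    refine ⟨Real.toNNReal (lipSemi f / (1 - q)), lipschitzOnWith_iff_dist_le_mul.2 ?_⟩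
    intro x hx y hy
    rw [Real.dist_eq, Real.dist_eq, Real.coe_toNNReal _ hulipnn]
    exact hulip x hx y hy
  have heq : ∀ x ∈ Icc (0:ℝ) 1, u x = φ x * u (φ₁ x) + (1 - φ x) * u (φ₂ x) + f x := by
    intro x hx
    have h1 := hsum _ (hφ₁mem x hx)
    have h2 := hsum _ (hφ₂mem x hx)
    have e : ∀ n : ℕ, φ x * (Tmap φ φ₁ φ₂)^[n] f (φ₁ x)
        + (1 - φ x) * (Tmap φ φ₁ φ₂)^[n] f (φ₂ x) = (Tmap φ φ₁ φ₂)^[n+1] f x := by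
      intro n
      rw [Function.iterate_succ_apply']
      rfl
    calc u x = ∑' n : ℕ, (Tmap φ φ₁ φ₂)^[n] f x := by rw [hu]
    _ = (Tmap φ φ₁ φ₂)^[0] f x + ∑' n : ℕ, (Tmap φ φ₁ φ₂)^[n+1] f x :=
        Summable.tsum_eq_zero_add (hsum x hx)
    _ = f x + ∑' n : ℕ, (φ x * (Tmap φ φ₁ φ₂)^[n] f (φ₁ x)
          + (1 - φ x) * (Tmap φ φ₁ φ₂)^[n] f (φ₂ x)) := by
        rw [Function.iterate_zero_apply]
        congr 1
        exact (tsum_congr fun n => (e n)).symm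
    _ = f x + (∑' n : ℕ, φ x * (Tmap φ φ₁ φ₂)^[n] f (φ₁ x)
          + ∑' n : ℕ, (1 - φ x) * (Tmap φ φ₁ φ₂)^[n] f (φ₂ x)) := by
        rw [Summable.tsum_add (h1.mul_left _) (h2.mul_left _)]
    _ = f x + (φ x * u (φ₁ x) + (1 - φ x) * u (φ₂ x)) := by
        rw [tsum_mul_left, tsum_mul_left, hu]
    _ = φ x * u (φ₁ x) + (1 - φ x) * u (φ₂ x) + f x := by ring
  have hle : lipSemi u ≤ lipSemi f / (1 - q) := lipSemi_le hulipnn hulip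
  refine ⟨u, ⟨⟨huIsLip, hu0, hu1⟩, heq, hle⟩, ?_⟩
  -- uniqueness
  intro w hw hweq
  obtain ⟨⟨Kw, hKw⟩, hw0, hw1⟩ := hw
  obtain ⟨Ku, hKu⟩ := huIsLip
  set d : ℝ → ℝ := fun t => w t - u t with hd
  have hdIsLip : IsLipOn01 d := ⟨Kw + Ku, hKw.sub hKu⟩
  have hd0 : d 0 = 0 := by rw [hd]; simp [hw0, hu0]
  have hd1 : d 1 = 0 := by rw [hd]; simp [hw1, hu1]
  have hdeq : ∀ t ∈ Icc (0:ℝ) 1, d t = φ t * d (φ₁ t) + (1 - φ t) * d (φ₂ t) := by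
    intro t ht
    have h1 := hweq t ht
    have h2 := heq t ht
    rw [hd]
    show w t - u t = φ t * (w (φ₁ t) - u (φ₁ t)) + (1 - φ t) * (w (φ₂ t) - u (φ₂ t))
    linear_combination h1 - h2
  have hM0 : 0 ≤ lipSemi d := lipSemi_nonneg hdIsLip
  have hstep := step_est φ φ₁ φ₂ hφ hφmem hφ₁ hφ₁1 hφ₁mem hφ₂ hφ₂0 hφ₂mem
    d (lipSemi d) hM0 hd0 hd1 (fun x hx y hy => abs_sub_le_lipSemi hdIsLip hx hy)
  have hdlip2 : ∀ x ∈ Icc (0:ℝ) 1, ∀ y ∈ Icc (0:ℝ) 1,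
      |d x - d y| ≤ q * lipSemi d * |x - y| := by
    intro x hx y hy
    have h := hstep x hx y hy
    simp only [Tmap] at h
    rwa [← hdeq x hx, ← hdeq y hy] at h
  have hMle : lipSemi d ≤ q * lipSemi d := lipSemi_le (mul_nonneg hq0 hM0) hdlip2
  have hMeq : lipSemi d = 0 := by nlinarith
  intro x hx
  have h := abs_sub_le_lipSemi hdIsLip hx hzero
  rw [hMeq, zero_mul, hd0] at h
  have hdx : d x = 0 := by simpa using h
  have : w x - u x = 0 := hdx
  linarith
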